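/- Let α₁, α₂, β₁, β₂ be complex numbers, and set a = λ₊₊₊₊, b = λ₋₊₋₊, c = λ₊₊₋₋, d = λ₊₋₋₊. Then ((a+b+c)² − d²)((a−b−c)² − d²) = 64·λ₀₊₀₀·λ₀₀₊₀·λ₊₋₊₊·λ₊₊₋₊ and ((a+b−c)² − d²)((a−b+c)² − d²) = 64·λ₊₀₀₀·λ₀₀₀₊·λ₋₊₊₊·λ₊₊₊₋. Moreover, if λ₊₊₊₊ ≠ 0, λ₋₊₋₊ ≠ 0 and λ₊₀₀₀λ₀₊₀₀λ₀₀₊₀λ₀₀₀₊ ≠ 0 and all denominators occurring in A₀ are nonzero, then with D₁ = diag(1, λ₋₊₊₊λ₊₋₊₊/(4λ₊₀₀₀λ₀₊₀₀), λ₊₋₊₊/(2λ₊₀₀₀), λ₋₊₊₊/(2λ₀₊₀₀)) one has A₁*·D₁ = D₁·A₀, i.e., D₁⁻¹·A₁*·D₁ = A₀: the Okubo system determined by A₁* coincides, up to the diagonal transformation D₁, with the system satisfied by the product of Gauss hypergeometric functions. -/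
import Mathlib


set_option maxHeartbeats 1000000
set_option synthInstance.maxHeartbeats 1000000
set_option linter.unusedVariables false

noncomputable section
open Matrix

/-- λ_{ι₁ι₂ι₃ι₄} = (ι₁α₁ + ι₂α₂ + ι₃β₁ + ι₄β₂)/2 with ι_j ∈ {1, −1, 0}. -/
def lam (α₁ α₂ β₁ β₂ : ℂ) (i j k l : ℤ) : ℂ :=
  ((i : ℂ) * α₁ + (j : ℂ) * α₂ + (k : ℂ) * β₁ + (l : ℂ) * β₂) / 2

/-- The coefficient matrix A₀ of the Okubo normal form system satisfied by the
product of Gauss hypergeometric functions. -/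
def A0mat (α₁ α₂ β₁ β₂ : ℂ) : Matrix (Fin 4) (Fin 4) ℂ :=
  !![lam α₁ α₂ β₁ β₂ 1 1 1 1, 0,
       lam α₁ α₂ β₁ β₂ 1 (-1) 1 1 * lam α₁ α₂ β₁ β₂ 1 1 1 (-1) / lam α₁ α₂ β₁ β₂ 1 1 1 1,
       lam α₁ α₂ β₁ β₂ (-1) 1 1 1 * lam α₁ α₂ β₁ β₂ 1 1 (-1) 1 / lam α₁ α₂ β₁ β₂ 1 1 1 1;
     0, -lam α₁ α₂ β₁ β₂ 1 1 1 1,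
       4 * lam α₁ α₂ β₁ β₂ 0 1 0 0 * lam α₁ α₂ β₁ β₂ 0 0 0 1 / lam α₁ α₂ β₁ β₂ (-1) (-1) (-1) (-1),
       4 * lam α₁ α₂ β₁ β₂ 1 0 0 0 * lam α₁ α₂ β₁ β₂ 0 0 1 0 / lam α₁ α₂ β₁ β₂ (-1) (-1) (-1) (-1);
     4 * lam α₁ α₂ β₁ β₂ 1 0 0 0 * lam α₁ α₂ β₁ β₂ 0 0 1 0 / lam α₁ α₂ β₁ β₂ (-1) 1 (-1) 1,
       lam α₁ α₂ β₁ β₂ (-1) 1 1 1 * lam α₁ α₂ β₁ β₂ 1 1 (-1) 1 / lam α₁ α₂ β₁ β₂ (-1) 1 (-1) 1,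
       lam α₁ α₂ β₁ β₂ (-1) 1 (-1) 1, 0;
     4 * lam α₁ α₂ β₁ β₂ 0 1 0 0 * lam α₁ α₂ β₁ β₂ 0 0 0 1 / lam α₁ α₂ β₁ β₂ 1 (-1) 1 (-1),
       lam α₁ α₂ β₁ β₂ 1 (-1) 1 1 * lam α₁ α₂ β₁ β₂ 1 1 1 (-1) / lam α₁ α₂ β₁ β₂ 1 (-1) 1 (-1),
       0, -lam α₁ α₂ β₁ β₂ (-1) 1 (-1) 1]

/-- The 4×4 accessory-parameter-free matrix A₁* = [[aJ, B₁₂],[B₂₁, bJ]]. -/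
def A1star (a b c d : ℂ) : Matrix (Fin 4) (Fin 4) ℂ :=
  !![a, 0, ((a-b+c)^2-d^2)/(4*a), ((a+b+c)^2-d^2)/(4*a);
     0, -a, (d^2-(a+b-c)^2)/(4*a), (d^2-(a-b-c)^2)/(4*a);
     ((a-b-c)^2-d^2)/(4*b), ((a+b+c)^2-d^2)/(4*b), b, 0;
     (d^2-(a+b-c)^2)/(4*b), (d^2-(a-b+c)^2)/(4*b), 0, -b]

/-- Theorem `thm:realize`. -/
theorem stmt_13 (α₁ α₂ β₁ β₂ a b c d : ℂ)
    (ha : a = lam α₁ α₂ β₁ β₂ 1 1 1 1) (hb : b = lam α₁ α₂ β₁ β₂ (-1) 1 (-1) 1)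
    (hc : c = lam α₁ α₂ β₁ β₂ 1 1 (-1) (-1)) (hd : d = lam α₁ α₂ β₁ β₂ 1 (-1) (-1) 1) :
    ((a+b+c)^2 - d^2) * ((a-b-c)^2 - d^2)
      = 64 * lam α₁ α₂ β₁ β₂ 0 1 0 0 * lam α₁ α₂ β₁ β₂ 0 0 1 0 * lam α₁ α₂ β₁ β₂ 1 (-1) 1 1 * lam α₁ α₂ β₁ β₂ 1 1 (-1) 1 ∧
    ((a+b-c)^2 - d^2) * ((a-b+c)^2 - d^2)
      = 64 * lam α₁ α₂ β₁ β₂ 1 0 0 0 * lam α₁ α₂ β₁ β₂ 0 0 0 1 * lam α₁ α₂ β₁ β₂ (-1) 1 1 1 * lam α₁ α₂ β₁ β₂ 1 1 1 (-1) ∧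
    (lam α₁ α₂ β₁ β₂ 1 1 1 1 ≠ 0 → lam α₁ α₂ β₁ β₂ (-1) 1 (-1) 1 ≠ 0 →
     lam α₁ α₂ β₁ β₂ 1 0 0 0 * lam α₁ α₂ β₁ β₂ 0 1 0 0 * lam α₁ α₂ β₁ β₂ 0 0 1 0 * lam α₁ α₂ β₁ β₂ 0 0 0 1 ≠ 0 →
     lam α₁ α₂ β₁ β₂ (-1) (-1) (-1) (-1) ≠ 0 → lam α₁ α₂ β₁ β₂ 1 (-1) 1 (-1) ≠ 0 →
      A1star a b c d *
        Matrix.diagonal ![1,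
          lam α₁ α₂ β₁ β₂ (-1) 1 1 1 * lam α₁ α₂ β₁ β₂ 1 (-1) 1 1 / (4 * lam α₁ α₂ β₁ β₂ 1 0 0 0 * lam α₁ α₂ β₁ β₂ 0 1 0 0),
          lam α₁ α₂ β₁ β₂ 1 (-1) 1 1 / (2 * lam α₁ α₂ β₁ β₂ 1 0 0 0),
          lam α₁ α₂ β₁ β₂ (-1) 1 1 1 / (2 * lam α₁ α₂ β₁ β₂ 0 1 0 0)]
      = Matrix.diagonal ![1,
          lam α₁ α₂ β₁ β₂ (-1) 1 1 1 * lam α₁ α₂ β₁ β₂ 1 (-1) 1 1 / (4 * lam α₁ α₂ β₁ β₂ 1 0 0 0 * lam α₁ α₂ β₁ β₂ 0 1 0 0),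
          lam α₁ α₂ β₁ β₂ 1 (-1) 1 1 / (2 * lam α₁ α₂ β₁ β₂ 1 0 0 0),
          lam α₁ α₂ β₁ β₂ (-1) 1 1 1 / (2 * lam α₁ α₂ β₁ β₂ 0 1 0 0)] * A0mat α₁ α₂ β₁ β₂) := by
  subst ha hb hc hd
  refine ⟨by simp [lam]; ring, by simp [lam]; ring, ?_⟩
  intro h1 h2 h3 h4 h5
  have e1 : lam α₁ α₂ β₁ β₂ 1 0 0 0 ≠ 0 := fun h => h3 (by rw [h]; ring)
  have e2 : lam α₁ α₂ β₁ β₂ 0 1 0 0 ≠ 0 := fun h => h3 (by rw [h]; ring)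
  have e3 : lam α₁ α₂ β₁ β₂ 0 0 1 0 ≠ 0 := fun h => h3 (by rw [h]; ring)
  have e4 : lam α₁ α₂ β₁ β₂ 0 0 0 1 ≠ 0 := fun h => h3 (by rw [h]; ring)
  ext i j
  fin_cases i <;> fin_cases j <;>
    simp [A1star, A0mat, Matrix.mul_apply, Fin.sum_univ_four, Matrix.diagonal_apply] <;>
    field_simp [h1, h2, e1, e2, e3, e4, h4, h5] <;>
    · simp only [lam]
      ring
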